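/- Let $q = \sum_{\alpha} a_\alpha Z_\alpha$ be a positive regular noncommutative polynomial and for $m \geq 1$ define the coefficients $b^{(m)}_{g_0} = 1$ and $b^{(m)}_\alpha = \sum_{j=1}^{|\alpha|} \sum_{\gamma_1 \cdots \gamma_j = \alpha, |\gamma_i| \geq 1} a_{\gamma_1} \cdots a_{\gamma_j} \binom{j+m-1}{m-1}$ for $|\alpha| \geq 1$. Then for all words $\alpha, \beta$ in the free semigroup $\mathbb{F}_n^+$, one has $b^{(m)}_\alpha b^{(m)}_\beta \leq \binom{|\beta|+m-1}{m-1} b^{(m)}_{\alpha\beta}$. -/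

import Mathlib

/-!
Splitting `α` along a composition `c` and `β` along `d` is the same as splitting `α ++ β` along
the concatenated composition, which has `c.length + d.length` blocks. Since the factor
`C(j + m - 1, m - 1)` is monotone in `j` and `d` has at most `|β|` blocks, every term of the
product `b_α b_β` is bounded by `C(|β| + m - 1, m - 1)` times a term of `b_{αβ}`, and distinct
pairs `(c, d)` give distinct concatenations.
-/

open scoped BigOperators

/-- The coefficients `b^(m)_α` associated with a positive regular noncommutative
polynomial with coefficients `a`: `b_{g₀} = 1` and for `|α| ≥ 1`,
`b_α = ∑_{j=1}^{|α|} ∑_{γ₁⋯γ_j = α, |γ_i| ≥ 1} a_{γ₁}⋯a_{γ_j} * C(j+m-1, m-1)`,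
realized as a sum over all compositions of `α.length`. -/
noncomputable def bcoef (n m : ℕ) (a : List (Fin n) → ℝ) (α : List (Fin n)) : ℝ :=
  if α = [] then 1 else
    ∑ c : Composition α.length,
      ((c.length + m - 1).choose (m - 1) : ℝ) * ((α.splitWrtComposition c).map a).prod

namespace Composition

theorem eq_of_blocks_eq_append {p : ℕ} {c d : Composition p} {t : List ℕ}
    (h : d.blocks = c.blocks ++ t) : c = d := by
  have ht_sum : t.sum = 0 := by
    have := congrArg List.sum h
    rw [List.sum_append, c.blocks_sum, d.blocks_sum] at this
    omega
  have ht : t = [] := List.eq_nil_iff_forall_not_mem.2 fun x hx =>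
    (d.blocks_pos (h ▸ List.mem_append_right _ hx)).ne' (List.sum_eq_zero_iff.1 ht_sum x hx)
  exact Composition.ext (by rw [h, ht, List.append_nil])

theorem append_injective {p q : ℕ} :
    Function.Injective fun x : Composition p × Composition q => x.1.append x.2 := by
  rintro ⟨c₁, c₂⟩ ⟨d₁, d₂⟩ h
  have hb : c₁.blocks ++ c₂.blocks = d₁.blocks ++ d₂.blocks := congrArg Composition.blocks h
  obtain rfl : c₁ = d₁ := by
    rcases List.append_eq_append_iff.1 hb with ⟨t, ht, -⟩ | ⟨t, ht, -⟩
    · exact eq_of_blocks_eq_append ht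
    · exact (eq_of_blocks_eq_append ht).symm
  exact Prod.ext rfl (Composition.ext (List.append_cancel_left hb))

end Composition

theorem Nat.choose_mul_choose_pred_le {m j k l : ℕ} (hkl : k ≤ l) :
    (j + m - 1).choose (m - 1) * (k + m - 1).choose (m - 1) ≤
      (l + m - 1).choose (m - 1) * (j + k + m - 1).choose (m - 1) := by
  rw [mul_comm]
  exact Nat.mul_le_mul (Nat.choose_le_choose _ (by omega)) (Nat.choose_le_choose _ (by omega))

theorem List.splitWrtComposition_append {A : Type*} (l₁ l₂ : List A)
    (c₁ : Composition l₁.length) (c₂ : Composition l₂.length)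
    (c : Composition (l₁ ++ l₂).length) (hc : c.blocks = c₁.blocks ++ c₂.blocks) :
    (l₁ ++ l₂).splitWrtComposition c = l₁.splitWrtComposition c₁ ++ l₂.splitWrtComposition c₂ := by
  rw [List.eq_iff_flatten_eq]
  simp [List.map_length_splitWrtComposition, hc]

section CompositionWeight

variable {A : Type*} (m : ℕ) (a : List A → ℝ)

noncomputable def compositionWeight (l : List A) (c : Composition l.length) : ℝ :=
  ((c.length + m - 1).choose (m - 1) : ℝ) * ((l.splitWrtComposition c).map a).prod

theorem compositionWeight_nil (c : Composition ([] : List A).length) :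
    compositionWeight m a [] c = 1 := by
  have hc : c.length = 0 := Nat.le_zero.1 c.length_le
  have hsplit : ([] : List A).splitWrtComposition c = [] :=
    List.length_eq_zero_iff.1 (by rw [List.length_splitWrtComposition, hc])
  simp [compositionWeight, hc, hsplit]

variable {a}

theorem prod_map_splitWrtComposition_nonneg (ha : ∀ γ, 0 ≤ a γ) (l : List A)
    (c : Composition l.length) : 0 ≤ ((l.splitWrtComposition c).map a).prod :=
  List.prod_nonneg fun x hx => by
    obtain ⟨γ, -, rfl⟩ := List.mem_map.1 hx
    exact ha γ

theorem compositionWeight_nonneg (ha : ∀ γ, 0 ≤ a γ) (l : List A) (c : Composition l.length) :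
    0 ≤ compositionWeight m a l c :=
  mul_nonneg (Nat.cast_nonneg _) (prod_map_splitWrtComposition_nonneg ha l c)

theorem compositionWeight_mul_le (ha : ∀ γ, 0 ≤ a γ) (l₁ l₂ : List A)
    (c₁ : Composition l₁.length) (c₂ : Composition l₂.length) :
    compositionWeight m a l₁ c₁ * compositionWeight m a l₂ c₂ ≤
      ((l₂.length + m - 1).choose (m - 1) : ℝ) *
        compositionWeight m a (l₁ ++ l₂) ((c₁.append c₂).cast List.length_append.symm) := by
  have hbin : ((c₁.length + m - 1).choose (m - 1) * (c₂.length + m - 1).choose (m - 1) : ℝ) ≤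
      (l₂.length + m - 1).choose (m - 1) * (c₁.length + c₂.length + m - 1).choose (m - 1) := by
    exact_mod_cast Nat.choose_mul_choose_pred_le c₂.length_le
  have hsplit := List.splitWrtComposition_append l₁ l₂ c₁ c₂
    ((c₁.append c₂).cast List.length_append.symm) rfl
  have hlen : ((c₁.append c₂).cast List.length_append.symm).length = c₁.length + c₂.length := by
    simp [Composition.length]
  have hP₁ := prod_map_splitWrtComposition_nonneg ha l₁ c₁
  have hP₂ := prod_map_splitWrtComposition_nonneg ha l₂ c₂
  simp only [compositionWeight, hsplit, hlen, List.map_append, List.prod_append]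
  linarith [mul_le_mul_of_nonneg_right hbin (mul_nonneg hP₁ hP₂)]

theorem sum_compositionWeight_mul_le (ha : ∀ γ, 0 ≤ a γ) (l₁ l₂ : List A) :
    (∑ c, compositionWeight m a l₁ c) * (∑ c, compositionWeight m a l₂ c) ≤
      ((l₂.length + m - 1).choose (m - 1) : ℝ) * ∑ c, compositionWeight m a (l₁ ++ l₂) c := by
  let F : Composition l₁.length × Composition l₂.length ↪ Composition (l₁ ++ l₂).length :=
    ⟨fun x => (x.1.append x.2).cast List.length_append.symm, fun x y h =>
      Composition.append_injective <| Composition.ext <| by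
        simpa using congrArg Composition.blocks h⟩
  calc (∑ c, compositionWeight m a l₁ c) * (∑ c, compositionWeight m a l₂ c)
      = ∑ x : Composition l₁.length × Composition l₂.length,
          compositionWeight m a l₁ x.1 * compositionWeight m a l₂ x.2 := by
        rw [Fintype.sum_mul_sum, ← Fintype.sum_prod_type']
    _ ≤ ∑ x, ((l₂.length + m - 1).choose (m - 1) : ℝ) * compositionWeight m a (l₁ ++ l₂) (F x) :=
        Finset.sum_le_sum fun x _ => compositionWeight_mul_le m ha l₁ l₂ x.1 x.2
    _ = ((l₂.length + m - 1).choose (m - 1) : ℝ) *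
          ∑ c ∈ Finset.univ.map F, compositionWeight m a (l₁ ++ l₂) c := by
        rw [Finset.sum_map, Finset.mul_sum]
    _ ≤ ((l₂.length + m - 1).choose (m - 1) : ℝ) * ∑ c, compositionWeight m a (l₁ ++ l₂) c :=
        mul_le_mul_of_nonneg_left
          (Finset.sum_le_sum_of_subset_of_nonneg (Finset.subset_univ _) fun c _ _ =>
            compositionWeight_nonneg m ha _ c)
          (Nat.cast_nonneg _)

end CompositionWeight

theorem bcoef_eq_sum_compositionWeight (n m : ℕ) (a : List (Fin n) → ℝ) (α : List (Fin n)) :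
    bcoef n m a α = ∑ c, compositionWeight m a α c := by
  unfold bcoef
  split_ifs with hα
  · subst hα
    simp [compositionWeight_nil, composition_card]
  · rfl

theorem stmt0_general (n m : ℕ) (a : List (Fin n) → ℝ)
    (ha0 : ∀ α, 0 ≤ a α)
    (α β : List (Fin n)) :
    bcoef n m a α * bcoef n m a β ≤
      ((β.length + m - 1).choose (m - 1) : ℝ) * bcoef n m a (α ++ β) := by
  simp only [bcoef_eq_sum_compositionWeight]
  exact sum_compositionWeight_mul_le m ha0 α β

theorem stmt0 (n m : ℕ) (hm : 1 ≤ m) (a : List (Fin n) → ℝ)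
    (ha0 : ∀ α, 0 ≤ a α) (hae : a [] = 0) (hag : ∀ i : Fin n, 0 < a [i])
    (α β : List (Fin n)) :
    bcoef n m a α * bcoef n m a β ≤
      ((β.length + m - 1).choose (m - 1) : ℝ) * bcoef n m a (α ++ β) :=
  stmt0_general n m a ha0 α β
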